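/- For every subset S of at most two vertices of SP_9 and every function f : S → {+,−}, there exists a vertex z of SP_9, not in S, such that for each u ∈ S the edge uz has sign f(u). -/

import Mathlib

/-!
`SP_9` is the rook's graph `K₃ □ K₃` with its complement as the negative edges, and the
argument works in any `α × β` with `|α|, |β| ≥ 3`. The sign of the edge `uz` is read off
the two coordinate equalities `z.1 = u.1`, `z.2 = u.2`, so a witness for two prescribed
vertices `a ≠ b` is assembled coordinatewise from `a.i`, `b.i` and a value distinct from both.
A set of at most two vertices lies inside such a pair `{a, b}`.
-/

/-- Vertices of `SP_9`, identified with `{0,1,2} × {0,1,2}`. -/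
abbrev V9 : Type := Fin 3 × Fin 3

/-- The edge `uv` of `SP_9` is positive: `u ≠ v` and they agree in exactly one coordinate. -/
abbrev pos9 (u v : V9) : Prop :=
  (u.1 = v.1 ∧ u.2 ≠ v.2) ∨ (u.1 ≠ v.1 ∧ u.2 = v.2)

/-- The edge `uv` of `SP_9` is negative: `u ≠ v` and it is not positive. -/
abbrev neg9 (u v : V9) : Prop := u ≠ v ∧ ¬ pos9 u v

namespace RookGraph

variable {α β : Type*}

def AgreeInOne (u v : α × β) : Prop :=
  (u.1 = v.1 ∧ u.2 ≠ v.2) ∨ (u.1 ≠ v.1 ∧ u.2 = v.2)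

/-- The edge `uv` has sign `s`, with `true` for positive. -/
def HasSign (s : Bool) (u v : α × β) : Prop :=
  if s then AgreeInOne u v else u ≠ v ∧ ¬ AgreeInOne u v

variable {a b : α × β}

theorem hasSign_true_iff {v : α × β} :
    HasSign true a v ↔ (a.1 = v.1 ∧ a.2 ≠ v.2) ∨ (a.1 ≠ v.1 ∧ a.2 = v.2) :=
  Iff.rfl

theorem hasSign_false_iff {v : α × β} : HasSign false a v ↔ a.1 ≠ v.1 ∧ a.2 ≠ v.2 := by
  simp only [HasSign, AgreeInOne, Bool.false_eq_true, if_false, ne_eq, Prod.ext_iff]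
  tauto

theorem ne_of_hasSign {s : Bool} {v : α × β} (h : HasSign s a v) : v ≠ a := by
  rintro rfl
  cases s <;> simp_all [hasSign_true_iff, hasSign_false_iff]

variable (hα : 3 ≤ ENat.card α) (hβ : 3 ≤ ENat.card β)
include hα hβ

theorem exists_hasSign_false_false (a b : α × β) :
    ∃ z, HasSign false a z ∧ HasSign false b z := by
  obtain ⟨x, hxa, hxb⟩ := ENat.exists_ne_ne_of_three_le hα a.1 b.1
  obtain ⟨y, hya, hyb⟩ := ENat.exists_ne_ne_of_three_le hβ a.2 b.2
  exact ⟨(x, y), hasSign_false_iff.2 ⟨Ne.symm hxa, Ne.symm hya⟩,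
    hasSign_false_iff.2 ⟨Ne.symm hxb, Ne.symm hyb⟩⟩

theorem exists_hasSign_true_false (hab : a ≠ b) :
    ∃ z, HasSign true a z ∧ HasSign false b z := by
  simp only [hasSign_true_iff, hasSign_false_iff]
  by_cases h₁ : a.1 = b.1
  · have h₂ : a.2 ≠ b.2 := fun h₂ => hab (Prod.ext h₁ h₂)
    obtain ⟨x, hxa, -⟩ := ENat.exists_ne_ne_of_three_le hα a.1 a.1
    exact ⟨(x, a.2), by grind⟩
  · obtain ⟨y, hya, hyb⟩ := ENat.exists_ne_ne_of_three_le hβ a.2 b.2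
    exact ⟨(a.1, y), by grind⟩

theorem exists_hasSign_true_true (a b : α × β) :
    ∃ z, HasSign true a z ∧ HasSign true b z := by
  simp only [hasSign_true_iff]
  by_cases h₁ : a.1 = b.1
  · obtain ⟨y, hya, hyb⟩ := ENat.exists_ne_ne_of_three_le hβ a.2 b.2
    exact ⟨(a.1, y), by grind⟩
  by_cases h₂ : a.2 = b.2
  · obtain ⟨x, hxa, hxb⟩ := ENat.exists_ne_ne_of_three_le hα a.1 b.1
    exact ⟨(x, a.2), by grind⟩
  · exact ⟨(a.1, b.2), by grind⟩

theorem exists_hasSign_pair (hab : a ≠ b) (sa sb : Bool) :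
    ∃ z, HasSign sa a z ∧ HasSign sb b z := by
  cases sa <;> cases sb
  · exact exists_hasSign_false_false hα hβ a b
  · obtain ⟨z, hb, ha⟩ := exists_hasSign_true_false hα hβ hab.symm
    exact ⟨z, ha, hb⟩
  · exact exists_hasSign_true_false hα hβ hab
  · exact exists_hasSign_true_true hα hβ a b

end RookGraph

theorem sp9_property_P21 :
    ∀ S : Finset V9, S.card ≤ 2 → ∀ f : V9 → Bool,
      ∃ z : V9, z ∉ S ∧ ∀ u ∈ S, if f u then pos9 u z else neg9 u z := by
  intro S hS f
  have h3 : 3 ≤ ENat.card (Fin 3) := by simp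
  obtain ⟨T, hST, hT⟩ := Finset.exists_superset_card_eq hS (by simp)
  obtain ⟨a, b, hab, rfl⟩ := Finset.card_eq_two.mp hT
  obtain ⟨z, ha, hb⟩ := RookGraph.exists_hasSign_pair h3 h3 hab (f a) (f b)
  have hz : ∀ u ∈ ({a, b} : Finset V9), RookGraph.HasSign (f u) u z := by simp [ha, hb]
  refine ⟨z, fun hzS => RookGraph.ne_of_hasSign (hz z (hST hzS)) rfl, fun u hu => hz u (hST hu)⟩
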